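/- Let (G, L) be a rational structure such that L has the extendability property, and let H ≤ G be an L-quasi-convex subgroup. Then the following are equivalent: (1) H has finite index in G; (2) every word u ∈ L is a prefix of some word w ∈ L with μ(w) ∈ H. Moreover, if these conditions hold, then the index [G : H] equals the cardinality of the set V_L(H) = { H·μ(u) : u is a prefix of some word w ∈ L with μ(w) ∈ H }. -/
import Mathlib


open List

/-- A word over the alphabet Ã = A ∪ A⁻¹ is a `List (A × Bool)`: the letter `(a, true)`
stands for `a` and `(a, false)` for the formal inverse `a⁻¹`. A word is *reduced* if it
has no factor `a·a⁻¹` or `a⁻¹·a`. -/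
def Reduced {A : Type*} (w : List (A × Bool)) : Prop :=
  w.Chain' fun p q => ¬(p.1 = q.1 ∧ q.2 = !p.2)

variable {A : Type*} [Fintype A] {G : Type*} [Group G]

/-- Evaluation in `G` of a word over Ã, determined by the images `f a` of the letters.
This is the (inverse-respecting) monoid homomorphism μ : Ã* → G. -/
def eval (f : A → G) (w : List (A × Bool)) : G :=
  (w.map fun p => if p.2 then f p.1 else (f p.1)⁻¹).prod

/-- Word length of `g ∈ G` with respect to the generators `A`:
the least length of a word over Ã mapping onto `g`. -/
noncomputable def wlen (f : A → G) (g : G) : ℕ :=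
  sInf {n | ∃ w : List (A × Bool), eval f w = g ∧ w.length = n}

/-- A rational structure: `L` is a regular language of reduced words with μ(L) = G. -/
def RationalStructure (f : A → G) (L : Set (List (A × Bool))) : Prop :=
  Language.IsRegular (L : Language (A × Bool)) ∧ (∀ w ∈ L, Reduced w) ∧
    ∀ g : G, ∃ w ∈ L, eval f w = g

/-- `H` is L-quasi-convex with constant `k`: for every `w ∈ L` with `μ(w) ∈ H` and
every prefix `u` of `w`, there is `h ∈ H` with `|h⁻¹ μ(u)| ≤ k`. -/
def QCW (f : A → G) (L : Set (List (A × Bool))) (H : Subgroup G) (k : ℕ) : Prop :=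
  ∀ w ∈ L, eval f w ∈ H → ∀ u, u <+: w → ∃ h ∈ H, wlen f (h⁻¹ * eval f u) ≤ k

/-- The set of right cosets `H·μ(u)` where `u` ranges over prefixes of words
`w ∈ L` with `μ(w) ∈ H` (the vertex set of the Stallings graph Γ_L(H)). -/
def VL (f : A → G) (L : Set (List (A × Bool))) (H : Subgroup G) : Set (Set G) :=
  {S | ∃ w ∈ L, eval f w ∈ H ∧ ∃ u, u <+: w ∧ S = {x | ∃ h ∈ H, x = h * eval f u}}

/-- The formal inverse of a word over Ã. -/
def winv {A : Type*} (w : List (A × Bool)) : List (A × Bool) :=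
  (w.map fun p => (p.1, !p.2)).reverse

/-- L has the extendability property: for every u ∈ L there is a sequence (v_n) of words
such that for every n, u·v_n ∈ L and, for all but finitely many m, u is a prefix of some
word w ∈ L with μ(w) = μ(u v_n v_m⁻¹ u⁻¹). -/
def ExtProp (f : A → G) (L : Set (List (A × Bool))) : Prop :=
  ∀ u ∈ L, ∃ v : ℕ → List (A × Bool), ∀ n : ℕ,
    u ++ v n ∈ L ∧
    {m : ℕ | ¬ ∃ w ∈ L, u <+: w ∧
        eval f w = eval f (u ++ v n ++ winv (v m) ++ winv u)}.Finite


/-- Auxiliary: the right coset `H·g` as a set. -/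
def Rcos (H : Subgroup G) (g : G) : Set G := {x | ∃ h ∈ H, x = h * g}

lemma eval_append (f : A → G) (u v : List (A × Bool)) :
    eval f (u ++ v) = eval f u * eval f v := by
  simp [eval]

lemma eval_winv (f : A → G) (w : List (A × Bool)) :
    eval f (winv w) = (eval f w)⁻¹ := by
  induction w with
  | nil => simp [eval, winv]
  | cons p w ih =>
      have : winv (p :: w) = winv w ++ [(p.1, !p.2)] := by simp [winv]
      rw [this, eval_append, ih]
      have h1 : eval f (p :: w) = (if p.2 then f p.1 else (f p.1)⁻¹) * eval f w := by
        simp [eval]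
      have h2 : eval f [(p.1, !p.2)] = (if p.2 then f p.1 else (f p.1)⁻¹)⁻¹ := by
        cases hb : p.2 <;> simp [eval, hb]
      rw [h1, h2, mul_inv_rev]

lemma Rcos_eq_of_mem (H : Subgroup G) {h : G} (hh : h ∈ H) (g : G) :
    Rcos H (h * g) = Rcos H g := by
  ext x
  constructor
  · rintro ⟨h', hh', rfl⟩
    exact ⟨h' * h, H.mul_mem hh' hh, by group⟩
  · rintro ⟨h', hh', rfl⟩
    exact ⟨h' * h⁻¹, H.mul_mem hh' (H.inv_mem hh), by group⟩

lemma mem_Rcos_self (H : Subgroup G) (g : G) : g ∈ Rcos H g := ⟨1, H.one_mem, by simp⟩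

/-- The index of `H` equals the number of right cosets of `H`. -/
lemma index_eq_ncard_range (H : Subgroup G) :
    H.index = (Set.range (Rcos H)).ncard := by
  have hwd : ∀ (a b : G), (a : G ⧸ H) = (b : G ⧸ H) → Rcos H a⁻¹ = Rcos H b⁻¹ := by
    intro a b hab
    rw [QuotientGroup.eq] at hab
    have : b⁻¹ = (a⁻¹ * b)⁻¹ * a⁻¹ := by group
    rw [this]
    exact (Rcos_eq_of_mem H (H.inv_mem hab) a⁻¹).symm
  let φ : G ⧸ H → Set G := Quotient.lift (fun g => Rcos H g⁻¹) (fun a b hab =>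
    hwd a b (Quotient.sound hab))
  have hφmk : ∀ g : G, φ (QuotientGroup.mk g) = Rcos H g⁻¹ := fun g => rfl
  have hinj : Function.Injective φ := by
    intro x y
    induction x using QuotientGroup.induction_on
    induction y using QuotientGroup.induction_on
    rename_i a b
    rw [hφmk, hφmk]
    intro hab
    have hb : b⁻¹ ∈ Rcos H a⁻¹ := hab ▸ mem_Rcos_self H b⁻¹
    obtain ⟨h, hh, hb⟩ := hb
    rw [QuotientGroup.eq]
    have : a⁻¹ * b = h⁻¹ := by
      have := congrArg Inv.inv hb
      rw [mul_inv_rev, inv_inv, inv_inv] at this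
      rw [this]; group
    rw [this]; exact H.inv_mem hh
  have hrange : Set.range φ = Set.range (Rcos H) := by
    ext S
    constructor
    · rintro ⟨x, rfl⟩
      induction x using QuotientGroup.induction_on
      rename_i a
      exact ⟨a⁻¹, (hφmk a).symm⟩
    · rintro ⟨g, rfl⟩
      exact ⟨QuotientGroup.mk g⁻¹, by rw [hφmk, inv_inv]⟩
  rw [← hrange, ← Nat.card_coe_set_eq, Nat.card_range_of_injective hinj]
  rfl

/-- Quasi-convexity implies the vertex set is finite. -/
lemma VL_finite (f : A → G) (L : Set (List (A × Bool))) (H : Subgroup G) (k : ℕ)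
    (hL : RationalStructure f L) (hqc : QCW f L H k) : (VL f L H).Finite := by
  have hfin : ({g : G | wlen f g ≤ k}).Finite := by
    have h1 : {g : G | wlen f g ≤ k} ⊆ eval f '' {w : List (A × Bool) | w.length ≤ k} := by
      intro g hg
      have hne : {n | ∃ w : List (A × Bool), eval f w = g ∧ w.length = n}.Nonempty := by
        obtain ⟨w, _, hw⟩ := hL.2.2 g
        exact ⟨w.length, w, hw, rfl⟩
      obtain ⟨w, hw, hlen⟩ := Nat.sInf_mem hne
      exact ⟨w, by rw [Set.mem_setOf_eq, hlen]; exact hg, hw⟩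
    exact ((List.finite_length_le (A × Bool) k).image _).subset h1
  apply (hfin.image (Rcos H)).subset
  rintro S ⟨w, hwL, hwH, u, hu, rfl⟩
  obtain ⟨h, hh, hwlen⟩ := hqc w hwL hwH u hu
  refine ⟨h⁻¹ * eval f u, hwlen, ?_⟩
  rw [Rcos_eq_of_mem H (H.inv_mem hh)]
  rfl

/-- If every word of `L` extends inside `L` to a word evaluating into `H`,
then the vertex set is exactly the set of right cosets. -/
lemma VL_eq_range (f : A → G) (L : Set (List (A × Bool))) (H : Subgroup G)
    (hL : RationalStructure f L)
    (hcond : ∀ u ∈ L, ∃ w ∈ L, u <+: w ∧ eval f w ∈ H) :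
    VL f L H = Set.range (Rcos H) := by
  ext S
  constructor
  · rintro ⟨w, hwL, hwH, u, hu, rfl⟩
    exact ⟨eval f u, rfl⟩
  · rintro ⟨g, rfl⟩
    obtain ⟨u, huL, hue⟩ := hL.2.2 g
    obtain ⟨w, hwL, hu, hwH⟩ := hcond u huL
    refine ⟨w, hwL, hwH, u, hu, ?_⟩
    rw [← hue]
    rfl

/-- Finite index plus extendability gives the extension property into `H`. -/
lemma ext_dir (f : A → G) (L : Set (List (A × Bool))) (H : Subgroup G)
    (hext : ExtProp f L) (hidx : H.index ≠ 0) :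
    ∀ u ∈ L, ∃ w ∈ L, u <+: w ∧ eval f w ∈ H := by
  intro u huL
  have hfinQ : Finite (G ⧸ H) := Nat.finite_of_card_ne_zero hidx
  obtain ⟨v, hv⟩ := hext u huL
  set q : ℕ → G ⧸ H := fun n => QuotientGroup.mk (eval f (u ++ v n))⁻¹ with hq
  obtain ⟨y, hy⟩ := Finite.exists_infinite_fiber q
  have hyinf : (q ⁻¹' {y}).Infinite := Set.infinite_coe_iff.mp hy
  obtain ⟨n, hn⟩ := hyinf.nonempty
  obtain ⟨m, hm⟩ := (hyinf.diff (hv n).2).nonempty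
  obtain ⟨w, hwL, hu, hwe⟩ := not_not.mp hm.2
  refine ⟨w, hwL, hu, ?_⟩
  have hqnm : q n = q m := by
    have h1 : q n = y := hn
    have h2 : q m = y := hm.1
    rw [h1, h2]
  have hmem : eval f (u ++ v n) * (eval f (u ++ v m))⁻¹ ∈ H := by
    have := QuotientGroup.eq.mp hqnm
    simpa using this
  have heq : eval f (u ++ v n ++ winv (v m) ++ winv u)
      = eval f (u ++ v n) * (eval f (u ++ v m))⁻¹ := by
    simp only [eval_append, eval_winv, mul_inv_rev]
    group
  rw [hwe, heq]
  exact hmem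

/-- if L has the extendability property and H is L-quasi-convex, then H
has finite index in G iff every word of L is a prefix of some word w ∈ L with μ(w) ∈ H
(i.e. labels a path from the base vertex in Γ_L(H)); moreover in that case the index
[G : H] equals the number of vertices of Γ_L(H), i.e. the cardinality of V_L(H). -/
theorem stmt16 (f : A → G) (L : Set (List (A × Bool))) (H : Subgroup G)
    (hL : RationalStructure f L) (hext : ExtProp f L)
    (hqc : ∃ k, QCW f L H k) :
    (H.index ≠ 0 ↔ ∀ u ∈ L, ∃ w ∈ L, u <+: w ∧ eval f w ∈ H) ∧
    (H.index ≠ 0 → H.index = (VL f L H).ncard) := by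
  obtain ⟨k, hqck⟩ := hqc
  have hfinVL := VL_finite f L H k hL hqck
  have hB : ∀ _ : (∀ u ∈ L, ∃ w ∈ L, u <+: w ∧ eval f w ∈ H),
      H.index = (VL f L H).ncard := fun hc => by
    rw [VL_eq_range f L H hL hc]
    exact index_eq_ncard_range H
  constructor
  · constructor
    · exact fun hidx => ext_dir f L H hext hidx
    · intro hc
      rw [hB hc]
      have hne : (VL f L H).Nonempty := by
        obtain ⟨u, huL, -⟩ := hL.2.2 1
        obtain ⟨w, hwL, hu, hwH⟩ := hc u huL
        exact ⟨_, w, hwL, hwH, u, hu, rfl⟩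
      exact ((Set.ncard_pos hfinVL).mpr hne).ne'
  · intro hidx
    exact hB (ext_dir f L H hext hidx)
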